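/- arXiv:2512.19312 — 7 statements merged into one kernel-verified Lean document; each statement's English description precedes it below -/
import Mathlib

section
/- Let G be a finite simple graph and let W be an odd-parity cover of the odd-extension G̅ of G. Then setting V₁ = W ∩ V(G) and V₂ = V(G) \ V₁, both induced subgraphs G[V₁] and G[V₂] have all degrees even. -/
/-- The odd-extension of a graph `G`: to each vertex of even degree we attach a new
pendant vertex adjacent only to it. -/
def oddExtension {V : Type*} [Fintype V] [DecidableEq V]
    (G : SimpleGraph V) [DecidableRel G.Adj] :
    SimpleGraph (V ⊕ {v : V // Even (G.degree v)}) where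
  Adj x y :=
    match x, y with
    | Sum.inl u, Sum.inl w => G.Adj u w
    | Sum.inl u, Sum.inr v => u = v.1
    | Sum.inr v, Sum.inl u => v.1 = u
    | Sum.inr _, Sum.inr _ => False
  symm := by
    constructor
    rintro (u | v) (w | v') h
    · exact G.adj_symm h
    · exact h.symm
    · exact h.symm
    · exact h
  loopless := by
    constructor
    rintro (u | v) h
    · exact G.irrefl h
    · exact h
/-!
The closed neighbourhood of the pendant vertex `v'` is `{v, v'}`, so an odd-parity cover `W`
contains exactly one of `v` and `v'`. Hence the pendant of `v` lies in `W` exactly when `v ∉ W`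
and `deg v` is even. Counting the closed neighbourhood of `v` in `W`: if `v ∈ W` then
`|N(v) ∩ V₁| + 1` is odd; if `v ∉ W` then `|N(v) ∩ V₁| ≡ deg v (mod 2)`, so
`|N(v) ∩ V₂| = deg v - |N(v) ∩ V₁|` is even.
-/

theorem Set.ncard_preimage_inl_add_ncard_preimage_inr {α β : Type*} (s : Set (α ⊕ β))
    (hs : s.Finite := by toFinite_tac) :
    (Sum.inl ⁻¹' s).ncard + (Sum.inr ⁻¹' s).ncard = s.ncard := by
  conv_rhs => rw [← Set.image_preimage_inl_union_image_preimage_inr s]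
  rw [Set.ncard_union_eq (Set.disjoint_left.mpr (by simp))
      ((hs.preimage Sum.inl_injective.injOn).image _)
      ((hs.preimage Sum.inr_injective.injOn).image _),
    Set.ncard_image_of_injective _ Sum.inl_injective,
    Set.ncard_image_of_injective _ Sum.inr_injective]

theorem Set.odd_ncard_pair_inter_iff {α : Type*} {a b : α} (hab : a ≠ b) (W : Set α) :
    Odd (({a, b} ∩ W).ncard) ↔ (a ∈ W ↔ b ∉ W) := by
  by_cases ha : a ∈ W <;> by_cases hb : b ∈ W <;>
    simp [Set.insert_inter_of_mem, Set.insert_inter_of_notMem, Set.singleton_inter_of_mem,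
      Set.singleton_inter_of_notMem, Set.ncard_pair hab, ha, hb]

theorem Subtype.ncard_val_preimage_singleton {α : Type*} {p : α → Prop} [DecidablePred p]
    (a : α) :
    (Subtype.val ⁻¹' {a} : Set (Subtype p)).ncard = if p a then 1 else 0 := by
  split_ifs with ha
  · rw [← Set.ncard_singleton (⟨a, ha⟩ : Subtype p)]
    congr 1
    ext w
    simp [Subtype.ext_iff]
  · convert Set.ncard_empty (Subtype p)
    ext w
    simp only [Set.mem_preimage, Set.mem_singleton_iff, Set.mem_empty_iff_false, iff_false]
    rintro rfl
    exact ha w.2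

theorem SimpleGraph.ncard_neighborSet {V : Type*} (G : SimpleGraph V) [Fintype V]
    [DecidableRel G.Adj] (v : V) :
    (G.neighborSet v).ncard = G.degree v := by
  rw [Set.ncard_eq_toFinset_card', Set.toFinset_card, G.card_neighborSet_eq_degree]

def SimpleGraph.IsOddParityCover {α : Type*} (H : SimpleGraph α) (Q : Set α) : Prop :=
  ∀ x, Odd (((H.neighborSet x ∪ {x}) ∩ Q).ncard)

namespace oddExtension

variable {V : Type*} [Fintype V] [DecidableEq V] (G : SimpleGraph V) [DecidableRel G.Adj]

theorem closedNbhd_inr (w : {v : V // Even (G.degree v)}) :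
    (oddExtension G).neighborSet (.inr w) ∪ {.inr w} = {.inl w.1, .inr w} := by
  ext (u | u) <;> simp [SimpleGraph.neighborSet, oddExtension, eq_comm]

theorem preimage_inl_closedNbhd_inl (v : V) :
    Sum.inl ⁻¹' ((oddExtension G).neighborSet (.inl v) ∪ {.inl v}) =
      insert v (G.neighborSet v) := by
  ext u; simp [SimpleGraph.neighborSet, oddExtension]

theorem preimage_inr_closedNbhd_inl (v : V) :
    Sum.inr ⁻¹' ((oddExtension G).neighborSet (.inl v) ∪ {.inl v}) =
      Subtype.val ⁻¹' {v} := by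
  ext u; simp [SimpleGraph.neighborSet, oddExtension, eq_comm]

variable {G} {W : Set (V ⊕ {v : V // Even (G.degree v)})}

theorem inl_mem_iff_inr_notMem (hW : (oddExtension G).IsOddParityCover W)
    (w : {v : V // Even (G.degree v)}) : Sum.inl w.1 ∈ W ↔ Sum.inr w ∉ W :=
  (Set.odd_ncard_pair_inter_iff Sum.inl_ne_inr W).mp (closedNbhd_inr G w ▸ hW (.inr w))

theorem ncard_closedNbhd_inl_inter (v : V) :
    (((oddExtension G).neighborSet (.inl v) ∪ {.inl v}) ∩ W).ncard =
      (Sum.inl ⁻¹' W ∩ insert v (G.neighborSet v)).ncard +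
        (Sum.inr ⁻¹' W ∩ Subtype.val ⁻¹' {v}).ncard := by
  rw [← Set.ncard_preimage_inl_add_ncard_preimage_inr, Set.preimage_inter, Set.preimage_inter,
    preimage_inl_closedNbhd_inl, preimage_inr_closedNbhd_inl, Set.inter_comm,
    Set.inter_comm (Sum.inr ⁻¹' _)]

theorem even_ncard_inter_neighborSet_of_inl_mem (hW : (oddExtension G).IsOddParityCover W) {v : V}
    (hv : Sum.inl v ∈ W) : Even ((Sum.inl ⁻¹' W ∩ G.neighborSet v).ncard) := by
  have hpendants : Sum.inr ⁻¹' W ∩ Subtype.val ⁻¹' {v} = ∅ := by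
    ext w
    simp only [Set.mem_inter_iff, Set.mem_preimage, Set.mem_singleton_iff, Set.mem_empty_iff_false,
      iff_false, not_and]
    rintro hw rfl
    exact (inl_mem_iff_inr_notMem hW w).mp hv hw
  have h := hW (.inl v)
  rwa [ncard_closedNbhd_inl_inter, hpendants, Set.ncard_empty, add_zero,
    Set.inter_insert_of_mem (s := Sum.inl ⁻¹' W) hv,
    Set.ncard_insert_of_notMem (fun h ↦ G.irrefl h.2), Nat.odd_add_one, Nat.not_odd_iff_even] at h

theorem odd_ncard_inter_neighborSet_add_of_inl_notMem (hW : (oddExtension G).IsOddParityCover W)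
    {v : V} (hv : Sum.inl v ∉ W) :
    Odd ((Sum.inl ⁻¹' W ∩ G.neighborSet v).ncard + if Even (G.degree v) then 1 else 0) := by
  have hpendants : Sum.inr ⁻¹' W ∩ Subtype.val ⁻¹' {v} = Subtype.val ⁻¹' {v} := by
    refine Set.inter_eq_right.mpr ?_
    rintro w rfl
    by_contra hw
    exact hv ((inl_mem_iff_inr_notMem hW w).mpr hw)
  have h := hW (.inl v)
  rwa [ncard_closedNbhd_inl_inter, hpendants, Subtype.ncard_val_preimage_singleton,
    Set.inter_insert_of_notMem (s := Sum.inl ⁻¹' W) hv] at h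

theorem even_ncard_compl_inter_neighborSet_of_inl_notMem (hW : (oddExtension G).IsOddParityCover W)
    {v : V} (hv : Sum.inl v ∉ W) : Even (((Sum.inl ⁻¹' W)ᶜ ∩ G.neighborSet v).ncard) := by
  have hsplit : (Sum.inl ⁻¹' W ∩ G.neighborSet v).ncard +
      ((Sum.inl ⁻¹' W)ᶜ ∩ G.neighborSet v).ncard = G.degree v := by
    rw [← G.ncard_neighborSet,
      ← Set.ncard_inter_add_ncard_sdiff_eq_ncard (G.neighborSet v) (Sum.inl ⁻¹' W),
      Set.inter_comm, Set.sdiff_eq_compl_inter]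
  have h := odd_ncard_inter_neighborSet_add_of_inl_notMem hW hv
  split_ifs at h <;> grind

end oddExtension

/-- if `W` is an odd-parity cover of the odd-extension of `G`, then
`V₁ = W ∩ V(G)` and its complement both induce subgraphs of `G` with all degrees even. -/
theorem stmt_4 {V : Type*} [Fintype V] [DecidableEq V]
    (G : SimpleGraph V) [DecidableRel G.Adj]
    (W : Set (V ⊕ {v : V // Even (G.degree v)}))
    (hW : ∀ x, Odd ((((oddExtension G).neighborSet x ∪ {x}) ∩ W).ncard)) :
    (∀ v : V, Sum.inl v ∈ W →
      Even (({u : V | Sum.inl u ∈ W} ∩ G.neighborSet v).ncard)) ∧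
    (∀ v : V, Sum.inl v ∉ W →
      Even (({u : V | Sum.inl u ∉ W} ∩ G.neighborSet v).ncard)) :=
  ⟨fun _ ↦ oddExtension.even_ncard_inter_neighborSet_of_inl_mem hW,
    fun _ ↦ oddExtension.even_ncard_compl_inter_neighborSet_of_inl_notMem hW⟩
end

section
/- Let G be a finite simple graph whose every vertex has even degree, let A be its adjacency matrix over 𝔽₂, and let r = rank_{𝔽₂}(A). Suppose the all-ones vector 𝟏 lies in the image of A + I over 𝔽₂ (equivalently, by Gallai's theorem, an even-even partition exists). Then the number of subsets V₁ ⊆ V(G) such that both G[V₁] and G[V(G)\V₁] are even induced subgraphs equals 2^{n - r}, where n = |V(G)|. -/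
open Matrix

/-- for a finite simple graph `G` with all degrees even, adjacency matrix `A`
over `𝔽₂` of rank `r`, if the all-ones vector lies in the image of `A + I`, then the
number of subsets `V₁` with both `G[V₁]` and `G[V₁ᶜ]` even equals `2 ^ (n - r)`. -/
theorem stmt_6 {V : Type*} [Fintype V] [DecidableEq V]
    (G : SimpleGraph V) [DecidableRel G.Adj]
    (heven : ∀ v : V, Even (G.degree v))
    (hone : ∃ x : V → ZMod 2, (G.adjMatrix (ZMod 2) + 1) *ᵥ x = fun _ => 1) :
    Nat.card {V₁ : Set V //
        (∀ v ∈ V₁, Even ((V₁ ∩ G.neighborSet v).ncard)) ∧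
        (∀ v ∈ V₁ᶜ, Even ((V₁ᶜ ∩ G.neighborSet v).ncard))} =
      2 ^ (Fintype.card V - (G.adjMatrix (ZMod 2)).rank) := by
  classical
  set A := G.adjMatrix (ZMod 2) with hA
  -- ncard of intersection with neighbor set as a filter card
  have hns : ∀ (S : Set V) (v : V),
      (S ∩ G.neighborSet v).ncard = ((G.neighborFinset v).filter (· ∈ S)).card := by
    intro S v
    rw [← Set.ncard_coe_finset]
    congr 1
    ext u
    simp only [Finset.coe_filter, SimpleGraph.mem_neighborFinset, Set.mem_inter_iff,
      SimpleGraph.mem_neighborSet, Set.mem_setOf_eq]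
    tauto
  -- split of degree
  have hsplit : ∀ (V₁ : Set V) (v : V),
      (V₁ ∩ G.neighborSet v).ncard + (V₁ᶜ ∩ G.neighborSet v).ncard = G.degree v := by
    intro V₁ v
    rw [hns, hns, ← SimpleGraph.card_neighborFinset_eq_degree]
    have := Finset.card_filter_add_card_filter_not
      (s := G.neighborFinset v) (p := (· ∈ V₁))
    simpa [Set.mem_compl_iff] using this
  -- condition simplification
  have key : ∀ V₁ : Set V,
      ((∀ v ∈ V₁, Even ((V₁ ∩ G.neighborSet v).ncard)) ∧
       (∀ v ∈ V₁ᶜ, Even ((V₁ᶜ ∩ G.neighborSet v).ncard))) ↔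
      ∀ v : V, Even ((V₁ ∩ G.neighborSet v).ncard) := by
    intro V₁
    constructor
    · rintro ⟨h1, h2⟩ v
      by_cases hv : v ∈ V₁
      · exact h1 v hv
      · have hd := heven v
        have hs := hsplit V₁ v
        have h2v := h2 v hv
        rw [Nat.even_iff] at *
        omega
    · intro h
      refine ⟨fun v _ => h v, fun v _ => ?_⟩
      have hd := heven v
      have hs := hsplit V₁ v
      have := h v
      rw [Nat.even_iff] at *
      omega
  have hzero : ∀ n : ℕ, Even n ↔ ((n : ZMod 2) = 0) := by
    intro n
    rw [ZMod.natCast_eq_zero_iff]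
    exact ⟨fun ⟨k, hk⟩ => ⟨k, by omega⟩, fun ⟨k, hk⟩ => ⟨k, by omega⟩⟩
  have hx2 : ∀ a : ZMod 2, a = 0 ∨ a = 1 := by decide
  -- parity as kernel membership
  have hpar : ∀ (x : V → ZMod 2) (v : V),
      ((({u | x u = 1} ∩ G.neighborSet v).ncard : ZMod 2)) = (A *ᵥ x) v := by
    intro x v
    rw [SimpleGraph.adjMatrix_mulVec_apply, hns, ← Finset.sum_boole]
    refine Finset.sum_congr rfl fun u _ => ?_
    rcases hx2 (x u) with h | h <;> simp [Set.mem_setOf_eq, h]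
  let e : {V₁ : Set V //
        (∀ v ∈ V₁, Even ((V₁ ∩ G.neighborSet v).ncard)) ∧
        (∀ v ∈ V₁ᶜ, Even ((V₁ᶜ ∩ G.neighborSet v).ncard))} ≃
      LinearMap.ker A.mulVecLin :=
    { toFun := fun ⟨V₁, h⟩ => ⟨fun u => if u ∈ V₁ then 1 else 0, by
        rw [LinearMap.mem_ker]
        funext v
        have hset : {u | (if u ∈ V₁ then (1 : ZMod 2) else 0) = 1} = V₁ := by
          ext u; by_cases hu : u ∈ V₁ <;> simp [hu]
        have hv := ((key V₁).mp h) v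
        rw [hzero] at hv
        have := hpar (fun u => if u ∈ V₁ then 1 else 0) v
        rw [hset] at this
        simpa [Matrix.mulVecLin_apply, ← this] using hv⟩
      invFun := fun ⟨x, hx⟩ => ⟨{u | x u = 1}, by
        rw [key]
        intro v
        rw [hzero, hpar x v]
        rw [LinearMap.mem_ker] at hx
        rw [← Matrix.mulVecLin_apply, hx]
        rfl⟩
      left_inv := by
        rintro ⟨V₁, h⟩
        ext u
        simp only [Set.mem_setOf_eq]
        by_cases hu : u ∈ V₁ <;> simp [hu]
      right_inv := by
        rintro ⟨x, hx⟩
        ext u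
        rcases hx2 (x u) with h | h <;> simp [Set.mem_setOf_eq, h] }
  rw [Nat.card_congr e]
  -- counting the kernel
  have hcard : Nat.card (LinearMap.ker A.mulVecLin) =
      2 ^ Module.finrank (ZMod 2) (LinearMap.ker A.mulVecLin) := by
    rw [Nat.card_eq_fintype_card]
    have := Module.card_eq_pow_finrank (K := ZMod 2) (V := LinearMap.ker A.mulVecLin)
    simpa [ZMod.card] using this
  rw [hcard]
  congr 1
  have hrn := LinearMap.finrank_range_add_finrank_ker A.mulVecLin
  have hdim : Module.finrank (ZMod 2) (V → ZMod 2) = Fintype.card V := by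
    simp [Module.finrank_pi]
  rw [hdim] at hrn
  have : A.rank = Module.finrank (ZMod 2) (LinearMap.range A.mulVecLin) := rfl
  omega
end

section
/- Let q ≡ 1 (mod 4) be a prime power and let P_q be the Paley graph on 𝔽_q. The number of subsets V₁ ⊆ 𝔽_q such that both induced subgraphs P_q[V₁] and P_q[𝔽_q \ V₁] have all degrees even equals 2^{(q+1)/2} if q ≡ 1 (mod 8), and equals 2 if q ≡ 5 (mod 8). -/
/-!
Work over `𝔽₂` with the adjacency matrix `A` of `P_q` and the adjacency matrix `Ā` of its
complement. Every vertex has even degree, so `|S ∩ N(v)|` and `|Sᶜ ∩ N(v)|` have the same parity,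
and `S` is counted exactly when its indicator vector lies in `ker A`: the count is `2 ^ dim ker A`.

The entry `(A²)_{vw}` counts the common neighbours of `v` and `w`. The reflection `u ↦ v + w - u`
permutes them and fixes only the midpoint `(v + w)/2`, so modulo 2 the entry is the adjacency of
`v` and `(v + w)/2`: it is `A_{vw}` when `2` is a square (`q ≡ 1 mod 8`) and `Ā_{vw}` otherwise
(`q ≡ 5 mod 8`). As `I + A + Ā = J`, the kernels of `A` and `Ā` meet inside the constants.
If `A² = Ā`, then `ker A ⊆ ker Ā`, so `ker A` consists of the two constant vectors. If `A² = A`,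
then `AĀ = 0`; multiplication by a nonsquare is an isomorphism `P_q ≃ P̄_q`, so `A` and `Ā` have
the same nullity `k`, and `q - k ≤ k ≤ (q + 1)/2` forces `k = (q + 1)/2`.
-/

/-- The Paley graph on a finite field `F`: `x ~ y` iff `x ≠ y` and `x - y` is a square
(for `|F| ≡ 1 (mod 4)` the relation `IsSquare (x - y)` is already symmetric). -/
def paleyGraph (F : Type*) [Field F] : SimpleGraph F :=
  SimpleGraph.fromRel (fun x y => IsSquare (x - y))

open Finset Matrix Module LinearMap

theorem CharTwo.sum_eq_apply_of_involutive {α R : Type*} [Fintype α] [Ring R] [CharP R 2]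
    {f : α → R} {g : α → α} (hg : Function.Involutive g) (hfg : ∀ a, f (g a) = f a) {m : α}
    (hm : ∀ a, g a = a ↔ a = m) : ∑ a, f a = f m := by
  classical
  rw [← sum_erase_add _ _ (mem_univ m), add_eq_right]
  refine sum_involution (fun a _ => g a) (fun a _ => by rw [hfg, CharTwo.add_self_eq_zero])
    (fun a ha _ => by simpa [hm] using ha) (fun a ha => ?_) (fun a _ => hg a)
  have hgm : g m = m := (hm m).2 rfl
  simp only [mem_erase, mem_univ, and_true] at ha ⊢
  exact fun h => ha (by rw [← hg a, h, hgm])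

theorem FiniteField.isSquare_mul_iff {F : Type*} [Field F] [Fintype F] {a b : F} (ha : a ≠ 0)
    (hb : b ≠ 0) : IsSquare (a * b) ↔ (IsSquare a ↔ IsSquare b) := by
  classical
  rw [← quadraticChar_one_iff_isSquare ha, ← quadraticChar_one_iff_isSquare hb,
    ← quadraticChar_one_iff_isSquare (mul_ne_zero ha hb), map_mul]
  rcases quadraticChar_dichotomy ha with h | h <;>
    rcases quadraticChar_dichotomy hb with h' | h' <;> simp [h, h']

noncomputable def Set.equivFunZModTwo (V : Type*) : Set V ≃ (V → ZMod 2) where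
  toFun S := S.indicator 1
  invFun x := {v | x v ≠ 0}
  left_inv S := by ext v; by_cases hv : v ∈ S <;> simp [hv]
  right_inv x := by
    funext v
    have h01 : ∀ a : ZMod 2, (if a ≠ 0 then 1 else 0) = a := by decide
    simpa [Set.indicator_apply] using h01 (x v)

theorem LinearMap.two_mul_finrank_ker_eq_of_comp_eq_zero {K M : Type*} [Field K] [AddCommGroup M]
    [Module K M] [FiniteDimensional K M] {f g : Module.End K M} (hfg : f ∘ₗ g = 0)
    (hker : finrank K (ker f) = finrank K (ker g)) (hinf : finrank K ↥(ker f ⊓ ker g) ≤ 1)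
    (hM : Odd (finrank K M)) : 2 * finrank K (ker f) = finrank K M + 1 := by
  have hrange : finrank K (range g) ≤ finrank K (ker f) :=
    Submodule.finrank_mono (range_le_ker_iff.2 hfg)
  have hg := finrank_range_add_finrank_ker g
  have hsup := Submodule.finrank_sup_add_finrank_inf_eq (ker f) (ker g)
  have hsup_le := Submodule.finrank_le (ker f ⊔ ker g)
  obtain ⟨k, hk⟩ := hM
  omega

namespace SimpleGraph

variable {V : Type*} [Fintype V] {G : SimpleGraph V} [DecidableRel G.Adj]

theorem adjMatrix_mulVec_indicator_apply {R : Type*} [NonAssocSemiring R] (S : Set V) (v : V) :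
    (G.adjMatrix R *ᵥ S.indicator 1) v = ((S ∩ G.neighborSet v).ncard : R) := by
  classical
  have hS : S ∩ G.neighborSet v = ↑((G.neighborFinset v).filter (· ∈ S)) := by
    ext u; simp [and_comm]
  rw [adjMatrix_mulVec_apply, hS, Set.ncard_coe_finset, card_filter]
  push_cast
  exact sum_congr rfl fun u _ => by simp [Set.indicator_apply]

theorem adjMatrix_mulVec_one_eq_zero (hG : ∀ v, Even (G.degree v)) :
    G.adjMatrix (ZMod 2) *ᵥ 1 = 0 := by
  funext v
  simp [(ZMod.natCast_eq_zero_iff_even).2 (hG v)]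

theorem evenSplit_iff_adjMatrix_mulVec_eq_zero (hG : ∀ v, Even (G.degree v)) (S : Set V) :
    ((∀ v ∈ S, Even ((S ∩ G.neighborSet v).ncard)) ∧
      (∀ v ∈ Sᶜ, Even ((Sᶜ ∩ G.neighborSet v).ncard))) ↔
      G.adjMatrix (ZMod 2) *ᵥ S.indicator 1 = 0 := by
  have hcompl : G.adjMatrix (ZMod 2) *ᵥ Sᶜ.indicator 1 =
      -(G.adjMatrix (ZMod 2) *ᵥ S.indicator 1) := by
    rw [Set.indicator_compl, mulVec_sub, adjMatrix_mulVec_one_eq_zero hG, zero_sub]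
  simp only [← ZMod.natCast_eq_zero_iff_even, ← adjMatrix_mulVec_indicator_apply, hcompl,
    Pi.neg_apply, neg_eq_zero]
  constructor
  · rintro ⟨hS, hSc⟩
    funext v
    by_cases hv : v ∈ S
    exacts [hS v hv, hSc v hv]
  · intro h
    exact ⟨fun v _ => congrFun h v, fun v _ => congrFun h v⟩

theorem card_evenSplit_eq_two_pow_finrank_ker (hG : ∀ v, Even (G.degree v)) :
    Nat.card {S : Set V // (∀ v ∈ S, Even ((S ∩ G.neighborSet v).ncard)) ∧
      (∀ v ∈ Sᶜ, Even ((Sᶜ ∩ G.neighborSet v).ncard))} =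
      2 ^ finrank (ZMod 2) (ker (G.adjMatrix (ZMod 2)).mulVecLin) := by
  have hcard := Module.natCard_eq_pow_finrank (K := ZMod 2)
    (V := ker (G.adjMatrix (ZMod 2)).mulVecLin)
  rw [Nat.card_zmod] at hcard
  rw [← hcard]
  refine Nat.card_congr <| (Set.equivFunZModTwo V).subtypeEquiv fun S => ?_
  rw [evenSplit_iff_adjMatrix_mulVec_eq_zero hG, mem_ker, mulVecLin_apply]
  rfl

theorem Iso.finrank_ker_adjMatrix_eq {K W : Type*} [Field K] [Fintype W] {H : SimpleGraph W}
    [DecidableRel H.Adj] (e : G ≃g H) :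
    finrank K (ker (G.adjMatrix K).mulVecLin) = finrank K (ker (H.adjMatrix K).mulVecLin) := by
  have hG := finrank_range_add_finrank_ker (G.adjMatrix K).mulVecLin
  have hH := finrank_range_add_finrank_ker (H.adjMatrix K).mulVecLin
  have hrank : (H.adjMatrix K).rank = (G.adjMatrix K).rank := by
    rw [← e.reindex_adjMatrix K, rank_reindex]
  rw [Module.finrank_fintype_fun_eq_card, Fintype.card_congr e.toEquiv] at hG
  rw [Module.finrank_fintype_fun_eq_card] at hH
  unfold Matrix.rank at hrank
  omega

variable [DecidableEq V]

theorem ker_adjMatrix_inf_ker_adjMatrix_compl_le {K : Type*} [Field K] :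
    ker (G.adjMatrix K).mulVecLin ⊓ ker (Gᶜ.adjMatrix K).mulVecLin ≤ K ∙ 1 := by
  classical
  intro x ⟨hx, hxc⟩
  simp only [SetLike.mem_coe, mem_ker, mulVecLin_apply] at hx hxc
  have h := congrArg (· *ᵥ x) (G.one_add_adjMatrix_add_compl_adjMatrix_eq_of_one K)
  simp only [compl_adjMatrix_eq_adjMatrix_compl, add_mulVec, one_mulVec, hx, hxc, add_zero] at h
  refine Submodule.mem_span_singleton.2 ⟨∑ u, x u, funext fun v => ?_⟩
  rw [congrFun h v]
  simp [mulVec, dotProduct]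

theorem ker_adjMatrix_eq_span_one (hG : ∀ v, Even (G.degree v))
    (hsq : G.adjMatrix (ZMod 2) * G.adjMatrix (ZMod 2) = Gᶜ.adjMatrix (ZMod 2)) :
    ker (G.adjMatrix (ZMod 2)).mulVecLin = ZMod 2 ∙ 1 := by
  refine le_antisymm (fun x hx => ker_adjMatrix_inf_ker_adjMatrix_compl_le ⟨hx, ?_⟩) ?_
  · simp only [SetLike.mem_coe, mem_ker, mulVecLin_apply] at hx ⊢
    rw [← hsq, ← mulVec_mulVec, hx, mulVec_zero]
  · rw [Submodule.span_singleton_le_iff_mem, mem_ker, mulVecLin_apply]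
    exact adjMatrix_mulVec_one_eq_zero hG

theorem adjMatrix_mul_adjMatrix_compl_eq_zero (hG : ∀ v, Even (G.degree v))
    (hsq : G.adjMatrix (ZMod 2) * G.adjMatrix (ZMod 2) = G.adjMatrix (ZMod 2)) :
    G.adjMatrix (ZMod 2) * Gᶜ.adjMatrix (ZMod 2) = 0 := by
  have hJ : G.adjMatrix (ZMod 2) * of 1 = 0 := by
    ext v w
    simp [(ZMod.natCast_eq_zero_iff_even).2 (hG v)]
  have hcompl : Gᶜ.adjMatrix (ZMod 2) = of 1 - 1 - G.adjMatrix (ZMod 2) := by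
    rw [← G.one_add_adjMatrix_add_compl_adjMatrix_eq_of_one (ZMod 2),
      G.compl_adjMatrix_eq_adjMatrix_compl (α := ZMod 2)]
    abel
  rw [hcompl, mul_sub, mul_sub, hJ, hsq, mul_one, zero_sub]
  ext v w
  simp [ZMod.neg_eq_self_mod_two]

theorem two_mul_finrank_ker_adjMatrix_eq (hG : ∀ v, Even (G.degree v)) (hV : Odd (Fintype.card V))
    (hsq : G.adjMatrix (ZMod 2) * G.adjMatrix (ZMod 2) = G.adjMatrix (ZMod 2)) (e : G ≃g Gᶜ) :
    2 * finrank (ZMod 2) (ker (G.adjMatrix (ZMod 2)).mulVecLin) = Fintype.card V + 1 := by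
  rw [← Module.finrank_fintype_fun_eq_card (ZMod 2)] at hV ⊢
  refine two_mul_finrank_ker_eq_of_comp_eq_zero ?_ e.finrank_ker_adjMatrix_eq ?_ hV
  · rw [← Matrix.mulVecLin_mul, adjMatrix_mul_adjMatrix_compl_eq_zero hG hsq, Matrix.mulVecLin_zero]
  · exact (Submodule.finrank_mono ker_adjMatrix_inf_ker_adjMatrix_compl_le).trans
      ((finrank_span_le_card {(1 : V → ZMod 2)}).trans (by simp))
end SimpleGraph

section Paley

variable {F : Type*} [Field F]

theorem paleyGraph_adj_iff_of_sub_eq {x y x' y' : F} (h : x - y = x' - y') :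
    (paleyGraph F).Adj x y ↔ (paleyGraph F).Adj x' y' := by
  simp only [paleyGraph, SimpleGraph.fromRel_adj, ne_eq, ← sub_eq_zero (a := x),
    ← sub_eq_zero (a := x'), ← neg_sub x, ← neg_sub x', h]

theorem paleyGraph_adj_iff (h : IsSquare (-1 : F)) {x y : F} :
    (paleyGraph F).Adj x y ↔ x ≠ y ∧ IsSquare (y - x) := by
  have hsymm : IsSquare (x - y) ↔ IsSquare (y - x) := by
    constructor <;> intro hxy <;> simpa [neg_sub] using h.mul hxy
  simp [paleyGraph, SimpleGraph.fromRel_adj, hsymm]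

theorem paleyGraph_adjMatrix_apply_of_sub_eq [DecidableRel (paleyGraph F).Adj] {R : Type*}
    [Zero R] [One R] {x y x' y' : F} (h : x - y = x' - y') :
    (paleyGraph F).adjMatrix R x y = (paleyGraph F).adjMatrix R x' y' := by
  simp only [SimpleGraph.adjMatrix_apply, paleyGraph_adj_iff_of_sub_eq h]

variable [Fintype F]

theorem paleyGraph_adj_midpoint_iff (h : IsSquare (-1 : F)) (hF : (2 : F) ≠ 0) {v w : F} :
    (paleyGraph F).Adj v (2⁻¹ * (v + w)) ↔ v ≠ w ∧ (IsSquare (2 : F) ↔ IsSquare (w - v)) := by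
  have hmid : 2⁻¹ * (v + w) - v = 2⁻¹ * (w - v) := by field_simp; ring
  rw [paleyGraph_adj_iff h, hmid]
  by_cases hvw : v = w
  · have hww : 2⁻¹ * (w + w) = w := by rw [← two_mul, inv_mul_cancel_left₀ hF]
    simp [hvw, hww]
  · have hwv : w - v ≠ 0 := sub_ne_zero.2 (Ne.symm hvw)
    have hvm : v ≠ 2⁻¹ * (v + w) := fun hvm => by
      rw [eq_comm, ← sub_eq_zero, hmid] at hvm
      exact mul_ne_zero (inv_ne_zero hF) hwv hvm
    rw [FiniteField.isSquare_mul_iff (inv_ne_zero hF) hwv, isSquare_inv]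
    simp [hvw, hvm]

def paleyGraphIsoCompl (h : IsSquare (-1 : F)) {n : F} (hn : ¬IsSquare n) :
    paleyGraph F ≃g (paleyGraph F)ᶜ where
  toEquiv := Equiv.mulLeft₀ n (by rintro rfl; exact hn IsSquare.zero)
  map_rel_iff' {x y} := by
    have hn0 : n ≠ 0 := by rintro rfl; exact hn IsSquare.zero
    simp only [Equiv.mulLeft₀_apply, SimpleGraph.compl_adj, paleyGraph_adj_iff h, ← mul_sub]
    by_cases hxy : x = y
    · simp [hxy]
    · rw [FiniteField.isSquare_mul_iff hn0 (sub_ne_zero.2 (Ne.symm hxy))]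
      simp [hxy, hn, hn0]

variable [DecidableRel (paleyGraph F).Adj]

open SimpleGraph in
theorem paleyGraph_degree_even (hF : (2 : F) ≠ 0) (v : F) : Even ((paleyGraph F).degree v) := by
  rw [← ZMod.natCast_eq_zero_iff_even]
  have hdeg : ((paleyGraph F).degree v : ZMod 2) = ∑ u, (paleyGraph F).adjMatrix (ZMod 2) v u := by
    simp [← card_neighborFinset_eq_degree, neighborFinset_eq_filter]
  rw [hdeg, CharTwo.sum_eq_apply_of_involutive (g := fun u => v + v - u) (m := v)]
  · simp
  · exact fun u => by simp
  · intro u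
    rw [paleyGraph_adjMatrix_apply_of_sub_eq (x' := u) (y' := v) (by ring)]
    exact ((paleyGraph F).isSymm_adjMatrix (α := ZMod 2)).apply v u
  · intro u
    rw [sub_eq_iff_eq_add, ← two_mul, ← two_mul, mul_right_inj' hF, eq_comm]

theorem paleyGraph_adjMatrix_mul_self_apply {R : Type*} [CommRing R] [CharP R 2] (hF : (2 : F) ≠ 0)
    (v w : F) :
    ((paleyGraph F).adjMatrix R * (paleyGraph F).adjMatrix R) v w =
      (paleyGraph F).adjMatrix R v (2⁻¹ * (v + w)) := by
  rw [Matrix.mul_apply, CharTwo.sum_eq_apply_of_involutive (g := fun u => v + w - u)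
    (m := 2⁻¹ * (v + w))]
  · have hmid : 2⁻¹ * (v + w) - w = v - 2⁻¹ * (v + w) := by field_simp; ring
    rw [paleyGraph_adjMatrix_apply_of_sub_eq hmid]
    simp only [SimpleGraph.adjMatrix_apply]
    split_ifs <;> simp
  · exact fun u => by simp
  · intro u
    rw [paleyGraph_adjMatrix_apply_of_sub_eq (x' := u) (y' := w) (by ring),
      paleyGraph_adjMatrix_apply_of_sub_eq (x := v + w - u) (x' := v) (y' := u) (by ring), mul_comm]
  · intro u
    rw [sub_eq_iff_eq_add, ← two_mul, eq_comm, eq_inv_mul_iff_mul_eq₀ hF]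

theorem paleyGraph_adjMatrix_mul_self_of_isSquare_two {R : Type*} [CommRing R] [CharP R 2]
    (h : IsSquare (-1 : F)) (hF : (2 : F) ≠ 0) (h2 : IsSquare (2 : F)) :
    (paleyGraph F).adjMatrix R * (paleyGraph F).adjMatrix R = (paleyGraph F).adjMatrix R := by
  ext v w
  have hadj : (paleyGraph F).Adj v (2⁻¹ * (v + w)) ↔ (paleyGraph F).Adj v w := by
    rw [paleyGraph_adj_midpoint_iff h hF, paleyGraph_adj_iff h, iff_true_left h2]
  simp only [paleyGraph_adjMatrix_mul_self_apply hF, SimpleGraph.adjMatrix_apply, hadj]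

theorem paleyGraph_adjMatrix_mul_self_of_not_isSquare_two [DecidableEq F] {R : Type*}
    [CommRing R] [CharP R 2] (h : IsSquare (-1 : F)) (h2 : ¬IsSquare (2 : F)) :
    (paleyGraph F).adjMatrix R * (paleyGraph F).adjMatrix R =
      (paleyGraph F)ᶜ.adjMatrix R := by
  have hF : (2 : F) ≠ 0 := fun h0 => h2 (h0 ▸ IsSquare.zero)
  ext v w
  have hadj : (paleyGraph F).Adj v (2⁻¹ * (v + w)) ↔ (paleyGraph F)ᶜ.Adj v w := by
    rw [paleyGraph_adj_midpoint_iff h hF, SimpleGraph.compl_adj, paleyGraph_adj_iff h,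
      iff_false_left h2]
    tauto
  simp only [paleyGraph_adjMatrix_mul_self_apply hF, SimpleGraph.adjMatrix_apply, hadj]

end Paley

theorem stmt_7_general {F : Type*} [Field F] [Fintype F]
    (hq : Fintype.card F % 4 = 1) :
    (Fintype.card F % 8 = 1 →
      Nat.card {S : Set F //
          (∀ v ∈ S, Even ((S ∩ (paleyGraph F).neighborSet v).ncard)) ∧
          (∀ v ∈ Sᶜ, Even ((Sᶜ ∩ (paleyGraph F).neighborSet v).ncard))} =
        2 ^ ((Fintype.card F + 1) / 2)) ∧
    (Fintype.card F % 8 = 5 →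
      Nat.card {S : Set F //
          (∀ v ∈ S, Even ((S ∩ (paleyGraph F).neighborSet v).ncard)) ∧
          (∀ v ∈ Sᶜ, Even ((Sᶜ ∩ (paleyGraph F).neighborSet v).ncard))} = 2) := by
  classical
  have hchar : ringChar F ≠ 2 := by rw [Ne, FiniteField.even_card_iff_char_two]; omega
  have hF : (2 : F) ≠ 0 := Ring.two_ne_zero hchar
  have hneg : IsSquare (-1 : F) := FiniteField.isSquare_neg_one_iff.2 (by omega)
  have hdeg := paleyGraph_degree_even hF
  rw [SimpleGraph.card_evenSplit_eq_two_pow_finrank_ker hdeg]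
  refine ⟨fun h8 => ?_, fun h5 => ?_⟩
  · obtain ⟨n, hn⟩ := FiniteField.exists_nonsquare hchar
    have h2 : IsSquare (2 : F) := FiniteField.isSquare_two_iff.2 (by omega)
    have hker := SimpleGraph.two_mul_finrank_ker_adjMatrix_eq hdeg (Nat.odd_iff.2 (by omega))
      (paleyGraph_adjMatrix_mul_self_of_isSquare_two hneg hF h2)
      (paleyGraphIsoCompl hneg hn)
    congr 1
    omega
  · have h2 : ¬IsSquare (2 : F) := by rw [FiniteField.isSquare_two_iff]; omega
    rw [SimpleGraph.ker_adjMatrix_eq_span_one hdeg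
      (paleyGraph_adjMatrix_mul_self_of_not_isSquare_two hneg h2),
      finrank_span_singleton one_ne_zero, pow_one]

/-- for a prime power `q ≡ 1 (mod 4)`, the number of subsets `V₁ ⊆ 𝔽_q` such
that both `P_q[V₁]` and `P_q[V₁ᶜ]` have all degrees even is `2 ^ ((q+1)/2)` if
`q ≡ 1 (mod 8)` and `2` if `q ≡ 5 (mod 8)`. -/
theorem stmt_7 {F : Type*} [Field F] [Fintype F] [DecidableEq F]
    (hq : Fintype.card F % 4 = 1) :
    (Fintype.card F % 8 = 1 →
      Nat.card {S : Set F //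
          (∀ v ∈ S, Even ((S ∩ (paleyGraph F).neighborSet v).ncard)) ∧
          (∀ v ∈ Sᶜ, Even ((Sᶜ ∩ (paleyGraph F).neighborSet v).ncard))} =
        2 ^ ((Fintype.card F + 1) / 2)) ∧
    (Fintype.card F % 8 = 5 →
      Nat.card {S : Set F //
          (∀ v ∈ S, Even ((S ∩ (paleyGraph F).neighborSet v).ncard)) ∧
          (∀ v ∈ Sᶜ, Even ((Sᶜ ∩ (paleyGraph F).neighborSet v).ncard))} = 2) :=
  stmt_7_general hq
end

section
/- Let q ≡ 5 (mod 8) be a prime power. Then the only subsets S ⊆ 𝔽_q such that both P_q[S] and P_q[𝔽_q \ S] have all degrees even are S = ∅ and S = 𝔽_q. -/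
section Aux

variable {F : Type*} [Field F] [Fintype F] [DecidableEq F]

lemma paley_isSquare_neg_iff (hneg : IsSquare (-1 : F)) (a : F) :
    IsSquare (-a) ↔ IsSquare a := by
  obtain ⟨i, hi⟩ := hneg
  constructor
  · rintro ⟨r, hr⟩
    refine ⟨i * r, ?_⟩
    rw [mul_mul_mul_comm, ← hi, ← hr]; ring
  · rintro ⟨r, hr⟩
    refine ⟨i * r, ?_⟩
    rw [mul_mul_mul_comm, ← hi, ← hr]; ring

lemma paley_adj (hneg : IsSquare (-1 : F)) {x y : F} :
    (paleyGraph F).Adj x y ↔ x ≠ y ∧ IsSquare (y - x) := by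
  rw [paleyGraph, SimpleGraph.fromRel_adj]
  constructor
  · rintro ⟨hne, h | h⟩
    · refine ⟨hne, ?_⟩
      rw [show y - x = -(x - y) by ring, paley_isSquare_neg_iff hneg]
      exact h
    · exact ⟨hne, h⟩
  · rintro ⟨hne, h⟩
    exact ⟨hne, Or.inr h⟩

lemma paley_isSquare_div_two_iff (h2ns : ¬ IsSquare (2 : F)) (h20 : (2 : F) ≠ 0)
    {a : F} (ha : a ≠ 0) : IsSquare (a / 2) ↔ ¬ IsSquare a := by
  have hχ2 : quadraticChar F 2 = -1 := quadraticChar_neg_one_iff_not_isSquare.mpr h2ns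
  have hd : a / 2 ≠ 0 := div_ne_zero ha h20
  have hmul : quadraticChar F (a / 2) * quadraticChar F 2 = quadraticChar F a := by
    rw [← map_mul]
    congr 1
    field_simp
  rw [← quadraticChar_one_iff_isSquare hd, ← quadraticChar_neg_one_iff_not_isSquare]
  rw [hχ2] at hmul
  constructor
  · intro h; rw [h] at hmul; linarith
  · intro h; rw [h] at hmul; linarith

end Aux

/-- for a prime power `q ≡ 5 (mod 8)`, the only subsets `S ⊆ 𝔽_q` such that
both `P_q[S]` and `P_q[𝔽_q \ S]` have all degrees even are `∅` and `𝔽_q`. -/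
theorem stmt_8 {F : Type*} [Field F] [Fintype F] [DecidableEq F]
    (hq : Fintype.card F % 8 = 5) (S : Set F)
    (h1 : ∀ v ∈ S, Even ((S ∩ (paleyGraph F).neighborSet v).ncard))
    (h2 : ∀ v ∈ Sᶜ, Even ((Sᶜ ∩ (paleyGraph F).neighborSet v).ncard)) :
    S = ∅ ∨ S = Set.univ := by
  classical
  -- basic facts about the field
  have hchar : ringChar F ≠ 2 := by
    intro h
    have := FiniteField.even_card_of_char_two (F := F) h
    omega
  have h20 : (2 : F) ≠ 0 := Ring.two_ne_zero hchar
  have hneg : IsSquare (-1 : F) := by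
    rw [FiniteField.isSquare_neg_one_iff]; omega
  have h2ns : ¬ IsSquare (2 : F) := by
    rw [FiniteField.isSquare_two_iff]
    intro h
    exact h.2 hq
  have adj_iff : ∀ x y : F, (paleyGraph F).Adj x y ↔ x ≠ y ∧ IsSquare (y - x) :=
    fun x y => paley_adj hneg
  -- small facts in ZMod 2
  have self2 : ∀ x : ZMod 2, x + x = 0 := by decide
  have sq2 : ∀ x : ZMod 2, x * x = x := by decide
  have zo2 : ∀ x : ZMod 2, x = 0 ∨ x = 1 := by decide
  -- the adjacency indicator and the set indicator
  have nb_symm : ∀ v u : F,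
      (if (paleyGraph F).Adj v u then (1 : ZMod 2) else 0)
        = (if (paleyGraph F).Adj u v then (1 : ZMod 2) else 0) := by
    intro v u
    simp only [SimpleGraph.adj_comm]
  have nb_self : ∀ v : F, (if (paleyGraph F).Adj v v then (1 : ZMod 2) else 0) = 0 := by
    intro v
    simp [(paleyGraph F).irrefl]
  -- parity of intersections as sums in ZMod 2
  have key0 : ∀ (A : Set F) (v : F),
      Even ((A ∩ (paleyGraph F).neighborSet v).ncard) ↔
        (∑ u : F, (if u ∈ A then (1 : ZMod 2) else 0)
          * (if (paleyGraph F).Adj v u then (1 : ZMod 2) else 0)) = 0 := by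
    intro A v
    have hset : A ∩ (paleyGraph F).neighborSet v =
        ↑(Finset.univ.filter fun u => u ∈ A ∧ (paleyGraph F).Adj v u) := by
      ext u
      simp [SimpleGraph.mem_neighborSet, and_comm]
    rw [hset, Set.ncard_coe_finset]
    have hcast : ((Finset.univ.filter fun u => u ∈ A ∧ (paleyGraph F).Adj v u).card : ZMod 2)
        = ∑ u : F, (if u ∈ A then (1 : ZMod 2) else 0)
            * (if (paleyGraph F).Adj v u then (1 : ZMod 2) else 0) := by
      rw [Finset.card_filter, Nat.cast_sum]
      refine Finset.sum_congr rfl fun u _ => ?_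
      by_cases hA : u ∈ A <;> by_cases hAdj : (paleyGraph F).Adj v u <;>
        simp [hA, hAdj]
    constructor
    · intro h
      rw [← hcast, ZMod.natCast_eq_zero_iff]
      exact h.two_dvd
    · intro h
      rw [← hcast, ZMod.natCast_eq_zero_iff] at h
      exact (even_iff_two_dvd).mpr h
  -- reflection about a vertex preserves adjacency to it
  have refl_adj : ∀ v u : F, (paleyGraph F).Adj v (2 * v - u) ↔ (paleyGraph F).Adj v u := by
    intro v u
    rw [adj_iff, adj_iff]
    have harg : 2 * v - u - v = -(u - v) := by ring
    rw [harg, paley_isSquare_neg_iff hneg]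
    constructor
    · rintro ⟨hne, hs⟩
      exact ⟨fun h => hne (by rw [h]; ring), hs⟩
    · rintro ⟨hne, hs⟩
      exact ⟨fun h => hne (by linear_combination -h), hs⟩
  -- every vertex has an even number of neighbors
  have deg0 : ∀ v : F, ∑ u : F, (if (paleyGraph F).Adj v u then (1 : ZMod 2) else 0) = 0 := by
    intro v
    refine Finset.sum_ninvolution (fun u => 2 * v - u) ?_ ?_ (fun _ => Finset.mem_univ _) ?_
    · intro u
      rw [if_congr (refl_adj v u) rfl rfl]
      exact self2 _
    · intro u hu hEq
      apply hu
      have hEq' : 2 * v - u = u := hEq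
      have h2vu : 2 * v = 2 * u := by linear_combination hEq'
      have hvu : v = u := mul_left_cancel₀ h20 h2vu
      simp [hvu, (paleyGraph F).irrefl]
    · intro u; ring
  -- Step A : A · 1_S = 0 over 𝔽₂
  have stepA : ∀ v : F, ∑ u : F,
      (if (paleyGraph F).Adj v u then (1 : ZMod 2) else 0)
        * (if u ∈ S then (1 : ZMod 2) else 0) = 0 := by
    have hmc : ∀ (A : Set F) (v : F), ∑ u : F,
        (if (paleyGraph F).Adj v u then (1 : ZMod 2) else 0)
          * (if u ∈ A then (1 : ZMod 2) else 0)
        = ∑ u : F, (if u ∈ A then (1 : ZMod 2) else 0)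
            * (if (paleyGraph F).Adj v u then (1 : ZMod 2) else 0) :=
      fun A v => Finset.sum_congr rfl fun u _ => mul_comm _ _
    intro v
    by_cases hv : v ∈ S
    · rw [hmc]
      exact (key0 S v).mp (h1 v hv)
    · have hS' := (key0 Sᶜ v).mp (h2 v hv)
      have hce : ∀ u : F, (if u ∈ Sᶜ then (1 : ZMod 2) else 0)
          = 1 + (if u ∈ S then (1 : ZMod 2) else 0) := by
        intro u
        by_cases hu : u ∈ S <;> simp [hu] <;> decide
      have hz : ∑ u : F, (1 + (if u ∈ S then (1 : ZMod 2) else 0))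
          * (if (paleyGraph F).Adj v u then (1 : ZMod 2) else 0) = 0 := by
        calc ∑ u : F, (1 + (if u ∈ S then (1 : ZMod 2) else 0))
              * (if (paleyGraph F).Adj v u then (1 : ZMod 2) else 0)
            = ∑ u : F, (if u ∈ Sᶜ then (1 : ZMod 2) else 0)
              * (if (paleyGraph F).Adj v u then (1 : ZMod 2) else 0) :=
              Finset.sum_congr rfl fun u _ => by rw [hce u]
          _ = 0 := by
            convert hS' using 2
            exact congrArg₂ _ (@if_congr _ _ _ (S.decidableCompl _) (Classical.propDecidable _) _ _ _ _ Iff.rfl rfl rfl) rfl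
      have hsplit : ∑ u : F, (1 + (if u ∈ S then (1 : ZMod 2) else 0))
          * (if (paleyGraph F).Adj v u then (1 : ZMod 2) else 0)
          = (∑ u : F, (if (paleyGraph F).Adj v u then (1 : ZMod 2) else 0))
            + ∑ u : F, (if u ∈ S then (1 : ZMod 2) else 0)
                * (if (paleyGraph F).Adj v u then (1 : ZMod 2) else 0) := by
        rw [← Finset.sum_add_distrib]
        exact Finset.sum_congr rfl fun u _ => by ring
      rw [hsplit, deg0 v, zero_add] at hz
      rw [hmc]; exact hz
  -- Step B : the strongly regular identity A² + A + I = J over 𝔽₂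
  have mat : ∀ w u : F, ∑ z : F,
      (if (paleyGraph F).Adj w z then (1 : ZMod 2) else 0)
        * (if (paleyGraph F).Adj z u then (1 : ZMod 2) else 0)
      = (if (paleyGraph F).Adj w u then (1 : ZMod 2) else 0)
        + (if w = u then (1 : ZMod 2) else 0) + 1 := by
    intro w u
    by_cases hwu : w = u
    · subst hwu
      have hdiag : ∑ z : F,
          (if (paleyGraph F).Adj w z then (1 : ZMod 2) else 0)
            * (if (paleyGraph F).Adj z w then (1 : ZMod 2) else 0)
          = ∑ z : F, (if (paleyGraph F).Adj w z then (1 : ZMod 2) else 0) := by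
        refine Finset.sum_congr rfl fun z _ => ?_
        rw [nb_symm z w, sq2]
      rw [hdiag, deg0 w, nb_self w, if_pos rfl]
      decide
    · -- the midpoint of w and u
      set m : F := (w + u) / 2 with hmdef
      have h2m : 2 * m = w + u := by rw [hmdef]; field_simp
      have hmw : m ≠ w := by
        intro h
        rw [h] at h2m
        exact hwu (by linear_combination h2m)
      have hmu : m ≠ u := by
        intro h
        rw [h] at h2m
        exact hwu (by linear_combination -h2m)
      -- the reflection z ↦ w + u - z swaps the two adjacency conditions
      have swap1 : ∀ z : F, (paleyGraph F).Adj w (w + u - z) ↔ (paleyGraph F).Adj z u := by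
        intro z
        rw [adj_iff, adj_iff]
        have harg : w + u - z - w = u - z := by ring
        rw [harg]
        constructor
        · rintro ⟨hne, hs⟩
          exact ⟨fun h => hne (by rw [h]; ring), hs⟩
        · rintro ⟨hne, hs⟩
          exact ⟨fun h => hne (by linear_combination h), hs⟩
      have swap2 : ∀ z : F, (paleyGraph F).Adj (w + u - z) u ↔ (paleyGraph F).Adj w z := by
        intro z
        rw [adj_iff, adj_iff]
        have harg : u - (w + u - z) = z - w := by ring
        rw [harg]
        constructor
        · rintro ⟨hne, hs⟩
          exact ⟨fun h => hne (by rw [h]; ring), hs⟩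
        · rintro ⟨hne, hs⟩
          exact ⟨fun h => hne (by linear_combination h), hs⟩
      -- split off the midpoint
      have hsplit : ∑ z : F,
          (if (paleyGraph F).Adj w z then (1 : ZMod 2) else 0)
            * (if (paleyGraph F).Adj z u then (1 : ZMod 2) else 0)
          = (if (paleyGraph F).Adj w m then (1 : ZMod 2) else 0)
              * (if (paleyGraph F).Adj m u then (1 : ZMod 2) else 0)
            + ∑ z ∈ Finset.univ.erase m,
                (if (paleyGraph F).Adj w z then (1 : ZMod 2) else 0)
                  * (if (paleyGraph F).Adj z u then (1 : ZMod 2) else 0) :=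
        (Finset.add_sum_erase _ _ (Finset.mem_univ m)).symm
      have herase : ∑ z ∈ Finset.univ.erase m,
          (if (paleyGraph F).Adj w z then (1 : ZMod 2) else 0)
            * (if (paleyGraph F).Adj z u then (1 : ZMod 2) else 0) = 0 := by
        refine Finset.sum_involution (fun z _ => w + u - z) ?_ ?_ ?_ ?_
        · intro z hz
          show (if (paleyGraph F).Adj w z then (1 : ZMod 2) else 0)
              * (if (paleyGraph F).Adj z u then (1 : ZMod 2) else 0)
            + (if (paleyGraph F).Adj w (w + u - z) then (1 : ZMod 2) else 0)
              * (if (paleyGraph F).Adj (w + u - z) u then (1 : ZMod 2) else 0) = 0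
          rw [if_congr (swap1 z) rfl rfl, if_congr (swap2 z) rfl rfl,
            mul_comm (if (paleyGraph F).Adj z u then (1 : ZMod 2) else 0)]
          exact self2 _
        · intro z hz _
          intro hEq
          have hEq' : w + u - z = z := hEq
          have hzm : z ≠ m := Finset.ne_of_mem_erase hz
          apply hzm
          have h2z : 2 * z = 2 * m := by rw [h2m]; linear_combination -hEq'
          exact mul_left_cancel₀ h20 h2z
        · intro z hz
          show w + u - z ∈ Finset.univ.erase m
          refine Finset.mem_erase.mpr ⟨?_, Finset.mem_univ _⟩
          intro hEq
          have hzm : z ≠ m := Finset.ne_of_mem_erase hz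
          apply hzm
          linear_combination -h2m - hEq
        · intro z hz
          show w + u - (w + u - z) = z
          ring
      rw [hsplit, herase, add_zero]
      -- compute the midpoint term
      have hmw' : m - w = (u - w) / 2 := by
        rw [eq_div_iff h20]; linear_combination h2m
      have hum' : u - m = (u - w) / 2 := by
        rw [eq_div_iff h20]; linear_combination -h2m
      have hAdjwm : (paleyGraph F).Adj w m ↔ IsSquare ((u - w) / 2) := by
        rw [adj_iff, hmw']
        simp [Ne.symm hmw]
      have hAdjmu : (paleyGraph F).Adj m u ↔ IsSquare ((u - w) / 2) := by
        rw [adj_iff, hum']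
        simp [hmu]
      have hAdjwu : (paleyGraph F).Adj w u ↔ IsSquare (u - w) := by
        rw [adj_iff]
        simp [hwu]
      have hdiv : IsSquare ((u - w) / 2) ↔ ¬ IsSquare (u - w) :=
        paley_isSquare_div_two_iff h2ns h20 (sub_ne_zero.mpr (Ne.symm hwu))
      rw [if_congr hAdjwm rfl rfl, if_congr hAdjmu rfl rfl, if_congr hAdjwu rfl rfl,
        if_neg hwu]
      by_cases hsq : IsSquare (u - w)
      · rw [if_pos hsq, if_neg (fun h => (hdiv.mp h) hsq)]
        decide
      · rw [if_neg hsq, if_pos (hdiv.mpr hsq)]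
        decide
  -- assemble: 1_S is constant
  have hδ : ∀ w : F, ∑ u : F,
      (if w = u then (1 : ZMod 2) else 0) * (if u ∈ S then (1 : ZMod 2) else 0)
      = (if w ∈ S then (1 : ZMod 2) else 0) := by
    intro w
    rw [Finset.sum_eq_single w]
    · rw [if_pos rfl, one_mul]
    · intro b _ hb
      rw [if_neg (Ne.symm hb), zero_mul]
    · intro h
      exact absurd (Finset.mem_univ w) h
  have hA2 : ∀ w : F, ∑ u : F,
      (∑ z : F, (if (paleyGraph F).Adj w z then (1 : ZMod 2) else 0)
        * (if (paleyGraph F).Adj z u then (1 : ZMod 2) else 0))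
        * (if u ∈ S then (1 : ZMod 2) else 0) = 0 := by
    intro w
    have hswap : ∑ u : F, (∑ z : F, (if (paleyGraph F).Adj w z then (1 : ZMod 2) else 0)
        * (if (paleyGraph F).Adj z u then (1 : ZMod 2) else 0))
        * (if u ∈ S then (1 : ZMod 2) else 0)
        = ∑ z : F, (if (paleyGraph F).Adj w z then (1 : ZMod 2) else 0)
            * ∑ u : F, (if (paleyGraph F).Adj z u then (1 : ZMod 2) else 0)
                * (if u ∈ S then (1 : ZMod 2) else 0) := by
      simp only [Finset.sum_mul, Finset.mul_sum]
      rw [Finset.sum_comm]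
      exact Finset.sum_congr rfl fun z _ => Finset.sum_congr rfl fun u _ => mul_assoc _ _ _
    rw [hswap]
    exact Finset.sum_eq_zero fun z _ => by rw [stepA z, mul_zero]
  have hconst : ∀ w : F, (if w ∈ S then (1 : ZMod 2) else 0)
      = ∑ u : F, (if u ∈ S then (1 : ZMod 2) else 0) := by
    intro w
    have h4 : ∀ x y : ZMod 2, (1 : ZMod 2) = (x + y + 1) + x + y := by decide
    have hone : ∑ u : F, (if u ∈ S then (1 : ZMod 2) else 0)
        = ∑ u : F, ((∑ z : F, (if (paleyGraph F).Adj w z then (1 : ZMod 2) else 0)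
            * (if (paleyGraph F).Adj z u then (1 : ZMod 2) else 0))
          + (if (paleyGraph F).Adj w u then (1 : ZMod 2) else 0)
          + (if w = u then (1 : ZMod 2) else 0)) * (if u ∈ S then (1 : ZMod 2) else 0) := by
      refine Finset.sum_congr rfl fun u _ => ?_
      have hco : (∑ z : F, (if (paleyGraph F).Adj w z then (1 : ZMod 2) else 0)
            * (if (paleyGraph F).Adj z u then (1 : ZMod 2) else 0))
          + (if (paleyGraph F).Adj w u then (1 : ZMod 2) else 0)
          + (if w = u then (1 : ZMod 2) else 0) = 1 := by
        rw [mat w u]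
        exact (h4 _ _).symm
      rw [hco, one_mul]
    rw [hone]
    simp only [add_mul]
    rw [Finset.sum_add_distrib, Finset.sum_add_distrib, hA2 w, stepA w, hδ w,
      zero_add, zero_add]
  rcases zo2 (∑ u : F, (if u ∈ S then (1 : ZMod 2) else 0)) with hc | hc
  · left
    ext a
    simp only [Set.mem_empty_iff_false, iff_false]
    intro ha
    have h := hconst a
    rw [hc, if_pos ha] at h
    exact one_ne_zero h
  · right
    ext a
    simp only [Set.mem_univ, iff_true]
    by_contra ha
    have h := hconst a
    rw [hc, if_neg ha] at h
    exact zero_ne_one h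
end

section
/- Let n be a positive integer, θ an integer with 1 ≤ θ ≤ n, and let G be a simple graph on n vertices. Then the number of subsets U ⊆ V(G) with θ/2 ≤ |U| ≤ θ such that G[U] has all degrees even is at least C(n, n−θ) / C(n − ⌈θ/2⌉, n−θ). -/
open Finset Matrix

namespace Stmt10Aux

variable {V : Type*} [Fintype V] [DecidableEq V]

lemma mem_range_of_ker_orth {K : Type*} [Field K] (M : Matrix V V K) (hM : M.IsSymm)
    (d : V → K) (h : ∀ y, M.mulVec y = 0 → d ⬝ᵥ y = 0) :
    ∃ x, M.mulVec x = d := by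
  by_contra hd
  push_neg at hd
  have hdR : d ∉ LinearMap.range M.mulVecLin := by
    intro ⟨x, hx⟩; exact hd x hx
  set R := LinearMap.range M.mulVecLin with hR
  have hq : R.mkQ d ≠ 0 := by
    simpa [Submodule.Quotient.mk_eq_zero] using hdR
  obtain ⟨φ, hφ⟩ : ∃ φ : Module.Dual K ((V → K) ⧸ R), φ (R.mkQ d) ≠ 0 := by
    by_contra hc
    push_neg at hc
    exact hq ((Module.forall_dual_apply_eq_zero_iff K _).mp hc)
  set f : (V → K) →ₗ[K] K := φ.comp R.mkQ with hf
  have hfr : ∀ z, f (M.mulVec z) = 0 := by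
    intro z
    have : M.mulVec z ∈ R := ⟨z, rfl⟩
    simp only [hf, LinearMap.comp_apply, Submodule.mkQ_apply]
    rw [(Submodule.Quotient.mk_eq_zero R).mpr this]
    exact φ.map_zero
  set y : V → K := fun v => f (fun j => if v = j then 1 else 0) with hy
  have hdot : ∀ z : V → K, f z = z ⬝ᵥ y := by
    intro z
    conv_lhs => rw [pi_eq_sum_univ z]
    rw [map_sum]
    simp [hy, dotProduct, f.map_smul, smul_eq_mul]
  have hMy : M.mulVec y = 0 := by
    funext u
    have h1 : ∀ z : V → K, (M.mulVec y) ⬝ᵥ z = 0 := by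
      intro z
      have h2 := hfr z
      rw [hdot] at h2
      rw [dotProduct_comm, Matrix.dotProduct_mulVec, ← Matrix.mulVec_transpose,
        hM.eq] at h2
      exact h2
    have := h1 (fun j => if u = j then 1 else 0)
    simpa [dotProduct] using this
  have := h y hMy
  rw [← hdot] at this
  exact hφ this

lemma exists_mulVec_eq_diag (M : Matrix V V (ZMod 2)) (hM : M.IsSymm) :
    ∃ x, M.mulVec x = fun v => M v v := by
  apply mem_range_of_ker_orth M hM
  intro y hy
  have hsq : ∀ a : ZMod 2, a * a = a := by decide
  set f : V × V → ZMod 2 := fun p => y p.1 * M p.1 p.2 * y p.2 with hfdef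
  have hS : ∑ p ∈ (univ ×ˢ univ : Finset (V × V)), f p = 0 := by
    rw [Finset.sum_product]
    have h1 : ∀ v, ∑ u, f (v, u) = y v * (M.mulVec y v) := by
      intro v
      rw [Matrix.mulVec, dotProduct, Finset.mul_sum]
      refine Finset.sum_congr rfl fun u _ => ?_
      simp [hfdef, mul_assoc]
    simp [h1, hy]
  have hoff : ∑ p ∈ (univ ×ˢ univ : Finset (V × V)).filter (fun p => ¬ p.1 = p.2), f p = 0 := by
    refine Finset.sum_involution (fun p _ => p.swap) ?_ ?_ ?_ ?_
    · intro p _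
      have hsymm : M p.2 p.1 = M p.1 p.2 := hM.apply p.1 p.2
      have h3 : f p + f p.swap = y p.1 * M p.1 p.2 * y p.2 + y p.1 * M p.1 p.2 * y p.2 := by
        simp only [hfdef, Prod.fst_swap, Prod.snd_swap, hsymm]; ring
      rw [h3]
      exact CharTwo.add_self_eq_zero _
    · intro p hp _
      simp only [Finset.mem_filter] at hp
      intro hc
      apply hp.2
      have h4 := congrArg Prod.fst hc
      simp only [Prod.fst_swap] at h4
      exact h4.symm
    · intro p hp
      simp only [Finset.mem_filter, Finset.mem_product] at hp ⊢
      exact ⟨⟨Finset.mem_univ _, Finset.mem_univ _⟩, fun hc => hp.2 hc.symm⟩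
    · intro p _; rfl
  have hdiag : ∑ p ∈ (univ ×ˢ univ : Finset (V × V)).filter (fun p => p.1 = p.2), f p
      = (fun v => M v v) ⬝ᵥ y := by
    rw [Finset.sum_filter, Finset.sum_product]
    have h2 : ∀ v : V, (∑ u, if v = u then f (v, u) else 0) = M v v * y v := by
      intro v
      rw [Finset.sum_ite_eq]
      simp only [Finset.mem_univ, if_true, hfdef]
      rw [mul_comm (y v) (M v v), mul_assoc, hsq]
    simp only [h2]
    rfl
  have hsum := Finset.sum_filter_add_sum_filter_not (univ ×ˢ univ : Finset (V × V))
    (fun p => p.1 = p.2) f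
  rw [hS, hoff, hdiag, add_zero] at hsum
  exact hsum

lemma even_of_cast_zero (n : ℕ) (h : (n : ZMod 2) = 0) : Even n := by
  have h2 : (n : ZMod 2) = ((0 : ℕ) : ZMod 2) := by simpa using h
  have := (ZMod.natCast_eq_natCast_iff' n 0 2).mp h2
  rw [Nat.even_iff]
  omega

lemma even_sub_of_cast_eq (a b : ℕ) (hba : b ≤ a) (h : (a : ZMod 2) = (b : ZMod 2)) :
    Even (a - b) := by
  have := (ZMod.natCast_eq_natCast_iff' a b 2).mp h
  rw [Nat.even_iff]
  omega

/-- Gallai's partition theorem, relative form. -/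
lemma gallai (G : SimpleGraph V) [DecidableRel G.Adj] (W : Finset V) :
    ∃ S : Finset V, S ⊆ W ∧
      (∀ v ∈ S, Even ((S.filter (fun u => G.Adj v u)).card)) ∧
      (∀ v ∈ W \ S, Even (((W \ S).filter (fun u => G.Adj v u)).card)) := by
  set A : Matrix V V (ZMod 2) :=
    Matrix.of (fun v u => if v ∈ W ∧ u ∈ W ∧ G.Adj v u then (1 : ZMod 2) else 0) with hA
  set Dd : V → ℕ := fun v => (W.filter (fun u => G.Adj v u)).card with hDd
  set M : Matrix V V (ZMod 2) := A + Matrix.diagonal (fun v => (Dd v : ZMod 2)) with hM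
  have hAsymm : Aᵀ = A := by
    ext v u
    simp only [Matrix.transpose_apply, hA, Matrix.of_apply]
    exact if_congr ⟨fun ⟨h1, h2, h3⟩ => ⟨h2, h1, h3.symm⟩,
      fun ⟨h1, h2, h3⟩ => ⟨h2, h1, h3.symm⟩⟩ rfl rfl
  have hMsymm : M.IsSymm := by
    rw [Matrix.IsSymm, hM, Matrix.transpose_add, Matrix.diagonal_transpose, hAsymm]
  have hMdiag : ∀ v, M v v = (Dd v : ZMod 2) := by
    intro v
    simp [hM, hA, Matrix.diagonal_apply_eq, G.irrefl]
  obtain ⟨x, hx⟩ := exists_mulVec_eq_diag M hMsymm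
  set S : Finset V := W.filter (fun v => x v = 1) with hSdef
  have hSW : S ⊆ W := Finset.filter_subset _ _
  have hx01 : ∀ a : ZMod 2, a = 0 ∨ a = 1 := by decide
  -- the key equation, for every v ∈ W
  have key : ∀ v ∈ W,
      ((S.filter (fun u => G.Adj v u)).card : ZMod 2) + (Dd v : ZMod 2) * x v
        = (Dd v : ZMod 2) := by
    intro v hv
    have h0 := congrFun hx v
    rw [hMdiag] at h0
    rw [hM, Matrix.add_mulVec] at h0
    have hDiagPart : (Matrix.diagonal (fun v => (Dd v : ZMod 2))).mulVec x v
        = (Dd v : ZMod 2) * x v := by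
      simp [Matrix.mulVec_diagonal]
    have hAPart : A.mulVec x v = ((S.filter (fun u => G.Adj v u)).card : ZMod 2) := by
      rw [Matrix.mulVec, dotProduct]
      have hterm : ∀ u, A v u * x u
          = if u ∈ S ∧ G.Adj v u then (1 : ZMod 2) else 0 := by
        intro u
        simp only [hA, Matrix.of_apply, hSdef, Finset.mem_filter]
        rcases hx01 (x u) with h | h <;> rw [h] <;>
          by_cases h1 : u ∈ W <;> by_cases h2 : G.Adj v u <;> simp [hv, h1, h2]
      calc (∑ u, A v u * x u) = ∑ u, if u ∈ S ∧ G.Adj v u then (1 : ZMod 2) else 0 := by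
            exact Finset.sum_congr rfl fun u _ => hterm u
        _ = ((univ.filter (fun u => u ∈ S ∧ G.Adj v u)).card : ZMod 2) := by
            rw [Finset.sum_boole]
        _ = ((S.filter (fun u => G.Adj v u)).card : ZMod 2) := by
            congr 1
            congr 1
            ext u
            simp [Finset.mem_filter]
    rw [Pi.add_apply, hDiagPart, hAPart] at h0
    exact h0
  refine ⟨S, hSW, ?_, ?_⟩
  · intro v hv
    have hvW : v ∈ W := hSW hv
    have hxv : x v = 1 := (Finset.mem_filter.mp hv).2
    have h0 := key v hvW
    rw [hxv, mul_one] at h0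
    have : ((S.filter (fun u => G.Adj v u)).card : ZMod 2) = 0 := by
      have h1 : ((S.filter (fun u => G.Adj v u)).card : ZMod 2) + (Dd v : ZMod 2)
          = 0 + (Dd v : ZMod 2) := by rw [h0, zero_add]
      exact add_right_cancel h1
    exact even_of_cast_zero _ this
  · intro v hv
    obtain ⟨hvW, hvS⟩ := Finset.mem_sdiff.mp hv
    have hxv : x v = 0 := by
      rcases hx01 (x v) with h | h
      · exact h
      · exact absurd (Finset.mem_filter.mpr ⟨hvW, h⟩) hvS
    have h0 := key v hvW
    rw [hxv, mul_zero, add_zero] at h0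
    have hsub : (W \ S).filter (fun u => G.Adj v u)
        = W.filter (fun u => G.Adj v u) \ S.filter (fun u => G.Adj v u) := by
      ext u
      simp only [Finset.mem_filter, Finset.mem_sdiff]
      tauto
    have hss : S.filter (fun u => G.Adj v u) ⊆ W.filter (fun u => G.Adj v u) :=
      Finset.filter_subset_filter _ hSW
    rw [hsub, Finset.card_sdiff_of_subset hss]
    exact even_sub_of_cast_eq _ _ (Finset.card_le_card hss) (by exact_mod_cast h0.symm)

lemma choose_sub_le (a b : ℕ) (hba : b ≤ a) : ∀ i, (a - i).choose (b - i) ≤ a.choose b := by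
  intro i
  induction i with
  | zero => simp
  | succ i ih =>
    refine le_trans ?_ ih
    by_cases hb : b - i = 0
    · have h1 : b - (i + 1) = 0 := by omega
      simp [hb, h1]
    · have h1 : b - i = (b - (i + 1)) + 1 := by omega
      have h2 : a - i = (a - (i + 1)) + 1 := by omega
      rw [h1, h2, Nat.choose_succ_succ]
      exact Nat.le_add_right _ _

lemma choose_mono_sub {n θ c k : ℕ} (hck : c ≤ k) (hkθ : k ≤ θ) (hθn : θ ≤ n) :
    (n - k).choose (θ - k) ≤ (n - c).choose (θ - c) := by
  have h1 : n - k = (n - c) - (k - c) := by omega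
  have h2 : θ - k = (θ - c) - (k - c) := by omega
  rw [h1, h2]
  exact choose_sub_le _ _ (by omega) _

lemma best_half {V : Type*} [Fintype V] [DecidableEq V] (G : SimpleGraph V)
    [DecidableRel G.Adj] (W : Finset V) :
    ∃ T : Finset V, T ⊆ W ∧ W.card ≤ 2 * T.card ∧
      (∀ v ∈ T, Even ((T.filter (fun u => G.Adj v u)).card)) := by
  obtain ⟨S, hSW, h1, h2⟩ := gallai G W
  have hcard : (W \ S).card + S.card = W.card := Finset.card_sdiff_add_card_eq_card hSW
  by_cases h : W.card ≤ 2 * S.card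
  · exact ⟨S, hSW, h, h1⟩
  · exact ⟨W \ S, Finset.sdiff_subset, by omega, h2⟩

end Stmt10Aux

open Stmt10Aux in
/-- for a simple graph `G` on `n` vertices and `1 ≤ θ ≤ n`, the number of
subsets `U` with `θ/2 ≤ |U| ≤ θ` inducing a subgraph with all degrees even is at least
`C(n, n-θ) / C(n - ⌈θ/2⌉, n-θ)`. -/
theorem stmt_10 {V : Type*} [Fintype V] [DecidableEq V]
    (G : SimpleGraph V) (n θ : ℕ) (hn : Fintype.card V = n)
    (hθ1 : 1 ≤ θ) (hθn : θ ≤ n) :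
    ((n.choose (n - θ) : ℝ) / ((n - (θ + 1) / 2).choose (n - θ) : ℝ)) ≤
      Nat.card {U : Set V //
        θ ≤ 2 * U.ncard ∧ U.ncard ≤ θ ∧
        ∀ v ∈ U, Even ((U ∩ G.neighborSet v).ncard)} := by
  classical
  set c := (θ + 1) / 2 with hc
  have hcθ : c ≤ θ := by omega
  set good : Finset (Finset V) := Finset.univ.filter (fun U : Finset V =>
    θ ≤ 2 * U.card ∧ U.card ≤ θ ∧
    ∀ v ∈ U, Even ((U.filter (fun u => G.Adj v u)).card)) with hgood
  have hmono : good.card ≤ Nat.card {U : Set V //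
      θ ≤ 2 * U.ncard ∧ U.ncard ≤ θ ∧
      ∀ v ∈ U, Even ((U ∩ G.neighborSet v).ncard)} := by
    rw [← Nat.card_eq_finsetCard good]
    refine Nat.card_le_card_of_injective
      (fun U => ⟨((U : Finset V) : Set V), ?_, ?_, ?_⟩) ?_
    · rw [Set.ncard_coe_finset]
      exact ((Finset.mem_filter.mp U.2).2).1
    · rw [Set.ncard_coe_finset]
      exact ((Finset.mem_filter.mp U.2).2).2.1
    · intro v hv
      have hset : ((U : Finset V) : Set V) ∩ G.neighborSet v
          = (((U : Finset V).filter (fun u => G.Adj v u) : Finset V) : Set V) := by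
        ext u
        simp [SimpleGraph.mem_neighborSet]
      rw [hset, Set.ncard_coe_finset]
      exact ((Finset.mem_filter.mp U.2).2).2.2 v (by simpa using hv)
    · intro U₁ U₂ h
      apply Subtype.ext
      exact Finset.coe_injective (by simpa using congrArg Subtype.val h)
  have hcover : ∀ W ∈ (Finset.univ : Finset V).powersetCard θ, ∃ U ∈ good, U ⊆ W := by
    intro W hW
    have hWc : W.card = θ := (Finset.mem_powersetCard.mp hW).2
    obtain ⟨T, hTW, hTcard, hTeven⟩ := best_half G W
    refine ⟨T, Finset.mem_filter.mpr ⟨Finset.mem_univ _, ?_, ?_, hTeven⟩, hTW⟩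
    · rw [hWc] at hTcard; exact hTcard
    · exact le_trans (Finset.card_le_card hTW) hWc.le
  have hsubset : (Finset.univ : Finset V).powersetCard θ ⊆
      good.biUnion (fun U =>
        ((Finset.univ : Finset V).powersetCard θ).filter (fun W => U ⊆ W)) := by
    intro W hW
    obtain ⟨U, hU, hUW⟩ := hcover W hW
    exact Finset.mem_biUnion.mpr ⟨U, hU, Finset.mem_filter.mpr ⟨hW, hUW⟩⟩
  have hfiber : ∀ U ∈ good,
      (((Finset.univ : Finset V).powersetCard θ).filter (fun W => U ⊆ W)).card
        ≤ (n - c).choose (θ - c) := by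
    intro U hU
    obtain ⟨hU1, hU2, -⟩ := (Finset.mem_filter.mp hU).2
    have hUc : c ≤ U.card := by omega
    have step1 : (((Finset.univ : Finset V).powersetCard θ).filter (fun W => U ⊆ W)).card
        ≤ ((Finset.univ \ U).powersetCard (θ - U.card)).card := by
      apply Finset.card_le_card_of_injOn (fun W => W \ U)
      · intro W hW
        obtain ⟨hWθ, hUW⟩ := Finset.mem_filter.mp hW
        have hWc : W.card = θ := (Finset.mem_powersetCard.mp hWθ).2
        exact Finset.mem_powersetCard.mpr
          ⟨Finset.sdiff_subset_sdiff (Finset.subset_univ W) (le_refl U),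
           by rw [Finset.card_sdiff_of_subset hUW, hWc]⟩
      · intro W₁ h₁ W₂ h₂ h
        have hU₁ := (Finset.mem_filter.mp h₁).2
        have hU₂ := (Finset.mem_filter.mp h₂).2
        rw [← Finset.sdiff_union_of_subset hU₁, ← Finset.sdiff_union_of_subset hU₂]
        simp only at h
        rw [h]
    have step2 : ((Finset.univ \ U).powersetCard (θ - U.card)).card
        = (n - U.card).choose (θ - U.card) := by
      rw [Finset.card_powersetCard, Finset.card_sdiff_of_subset (Finset.subset_univ U),
        Finset.card_univ, hn]
    calc (((Finset.univ : Finset V).powersetCard θ).filter (fun W => U ⊆ W)).card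
        ≤ (n - U.card).choose (θ - U.card) := by rw [← step2]; exact step1
      _ ≤ (n - c).choose (θ - c) := choose_mono_sub hUc hU2 hθn
  have hmain : n.choose θ ≤ good.card * ((n - c).choose (θ - c)) := by
    calc n.choose θ = ((Finset.univ : Finset V).powersetCard θ).card := by
          rw [Finset.card_powersetCard, Finset.card_univ, hn]
      _ ≤ (good.biUnion (fun U =>
            ((Finset.univ : Finset V).powersetCard θ).filter (fun W => U ⊆ W))).card :=
          Finset.card_le_card hsubset
      _ ≤ ∑ U ∈ good,
            (((Finset.univ : Finset V).powersetCard θ).filter (fun W => U ⊆ W)).card :=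
          Finset.card_biUnion_le
      _ ≤ ∑ _U ∈ good, (n - c).choose (θ - c) := Finset.sum_le_sum hfiber
      _ = good.card * ((n - c).choose (θ - c)) := by
          rw [Finset.sum_const, smul_eq_mul]
  have hswap : (n - c).choose (n - θ) = (n - c).choose (θ - c) := by
    have h1 : n - θ = (n - c) - (θ - c) := by omega
    rw [h1, Nat.choose_symm (by omega : θ - c ≤ n - c)]
  have hNsym : n.choose (n - θ) = n.choose θ := Nat.choose_symm hθn
  have hdpos : 0 < (n - c).choose (θ - c) := Nat.choose_pos (by omega)
  rw [hNsym, hswap, div_le_iff₀ (by exact_mod_cast hdpos)]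
  calc (n.choose θ : ℝ) ≤ (good.card * ((n - c).choose (θ - c)) : ℕ) := by
        exact_mod_cast hmain
    _ ≤ (Nat.card {U : Set V //
          θ ≤ 2 * U.ncard ∧ U.ncard ≤ θ ∧
          ∀ v ∈ U, Even ((U ∩ G.neighborSet v).ncard)} : ℝ) * ((n - c).choose (θ - c)) := by
        push_cast
        exact mul_le_mul_of_nonneg_right (by exact_mod_cast hmono) (by positivity)
end

section
/- Let E be a family of subsets of an n-element set V such that (i) every member of E has size at least m, and (ii) every subset W ⊆ V with |W| = θ contains at least one member of E, where m ≤ θ ≤ n. Then |E| ≥ C(n, n−θ) / C(n−m, n−θ). -/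
/-- if every member of a family `E` of subsets of an `n`-set has size at
least `m`, and every `θ`-subset contains a member of `E` (with `m ≤ θ ≤ n`), then
`|E| ≥ C(n, n-θ) / C(n-m, n-θ)`. -/
theorem stmt_11 {V : Type*} [Fintype V] [DecidableEq V]
    (E : Finset (Finset V)) (m θ n : ℕ) (hn : Fintype.card V = n)
    (hmθ : m ≤ θ) (hθn : θ ≤ n)
    (h1 : ∀ A ∈ E, m ≤ A.card)
    (h2 : ∀ W : Finset V, W.card = θ → ∃ A ∈ E, A ⊆ W) :
    ((n.choose (n - θ) : ℝ) / ((n - m).choose (n - θ) : ℝ)) ≤ E.card := by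
  have hpos : 0 < (n - m).choose (n - θ) :=
    Nat.choose_pos (Nat.sub_le_sub_left hmθ n)
  -- key natural-number inequality
  have key : n.choose (n - θ) ≤ E.card * (n - m).choose (n - θ) := by
    have hsub : (Finset.univ : Finset V).powersetCard (n - θ) ⊆
        E.biUnion (fun A => (Aᶜ).powersetCard (n - θ)) := by
      intro S hS
      rw [Finset.mem_powersetCard] at hS
      obtain ⟨A, hA, hAS⟩ := h2 Sᶜ (by
        rw [Finset.card_compl, hn, hS.2]
        omega)
      refine Finset.mem_biUnion.mpr ⟨A, hA, ?_⟩
      rw [Finset.mem_powersetCard]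
      refine ⟨?_, hS.2⟩
      intro x hx
      rw [Finset.mem_compl]
      intro hxA
      have := hAS hxA
      simp at this
      exact this hx
    calc n.choose (n - θ)
        = ((Finset.univ : Finset V).powersetCard (n - θ)).card := by
          rw [Finset.card_powersetCard, Finset.card_univ, hn]
      _ ≤ (E.biUnion (fun A => (Aᶜ).powersetCard (n - θ))).card :=
          Finset.card_le_card hsub
      _ ≤ ∑ A ∈ E, ((Aᶜ).powersetCard (n - θ)).card :=
          Finset.card_biUnion_le
      _ ≤ ∑ A ∈ E, (n - m).choose (n - θ) := by
          refine Finset.sum_le_sum fun A hA => ?_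
          rw [Finset.card_powersetCard, Finset.card_compl, hn]
          exact Nat.choose_le_choose _ (Nat.sub_le_sub_left (h1 A hA) n)
      _ = E.card * (n - m).choose (n - θ) := by
          rw [Finset.sum_const, smul_eq_mul]
  rw [div_le_iff₀ (by exact_mod_cast hpos)]
  exact_mod_cast key
end

section
/- Fix a constant 0 < p < 1 with p ≠ 1/2 and set γ = 1 − 2p. Then ∑_{k=0}^{r} C(r,k) γ^{k(r−k)} → 2 as r → ∞. -/
open Filter Finset

/-- for constant `0 < p < 1`, `p ≠ 1/2`, with `γ = 1 - 2p`,
`∑_{k=0}^{r} C(r,k) γ^{k(r-k)} → 2` as `r → ∞`. -/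
theorem stmt_16 (p : ℝ) (hp0 : 0 < p) (hp1 : p < 1) (hp : p ≠ 1 / 2) :
    Filter.Tendsto
      (fun r : ℕ => ∑ k ∈ Finset.range (r + 1),
        (r.choose k : ℝ) * (1 - 2 * p) ^ (k * (r - k)))
      Filter.atTop (nhds 2) := by
  set γ : ℝ := 1 - 2 * p with hγ
  have hγ0 : γ ≠ 0 := by
    simp only [hγ]; intro h; apply hp; linarith
  have hc1 : |γ| < 1 := by
    rw [abs_lt]; constructor <;> simp only [hγ] <;> linarith
  set c : ℝ := |γ| with hcdef
  have hc0 : 0 < c := abs_pos.mpr hγ0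
  set s : ℝ := Real.sqrt c with hsdef
  have hs0 : 0 < s := Real.sqrt_pos.mpr hc0
  have hs1 : s < 1 := by
    rw [hsdef, show (1:ℝ) = Real.sqrt 1 by simp]
    exact Real.sqrt_lt_sqrt hc0.le hc1
  have hcs : c = s ^ 2 := (Real.sq_sqrt hc0.le).symm
  -- auxiliary limits
  have hlim2 : Tendsto (fun r : ℕ => (1/s) * ((r:ℝ)^2 * s^r)) atTop (nhds 0) := by
    have := (tendsto_pow_const_mul_const_pow_of_lt_one 2 hs0.le hs1).const_mul (1/s)
    simpa using this
  have hlim1 : Tendsto (fun r : ℕ => (1/s) * ((r:ℝ)^1 * s^r)) atTop (nhds 0) := by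
    have := (tendsto_pow_const_mul_const_pow_of_lt_one 1 hs0.le hs1).const_mul (1/s)
    simpa using this
  have hxsmall : ∀ᶠ r : ℕ in atTop, (1/s) * ((r:ℝ)^1 * s^r) ≤ 1 :=
    hlim1.eventually (eventually_le_nhds one_pos)
  have key : Tendsto (fun r : ℕ =>
      (∑ k ∈ Finset.range (r + 1), (r.choose k : ℝ) * γ ^ (k * (r - k))) - 2)
      atTop (nhds 0) := by
    apply squeeze_zero_norm' ?_ hlim2
    filter_upwards [hxsmall, eventually_ge_atTop 1] with r hxle hr1
    -- rewrite x
    set x : ℝ := (r:ℝ) * s ^ (r - 1) with hxdef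
    have hx0 : 0 ≤ x := by positivity
    have hsr : s ^ r = s ^ (r - 1) * s := by
      rw [← pow_succ]; congr 1; omega
    have hxeq : (1/s) * ((r:ℝ)^1 * s^r) = x := by
      rw [hsr, hxdef]; field_simp
    have hx1 : x ≤ 1 := by rw [← hxeq]; exact hxle
    -- split the sum
    have hsplit : Finset.range (r + 1) = insert 0 (insert r (Finset.Ioo 0 r)) := by
      ext y; simp only [Finset.mem_range, Finset.mem_insert, Finset.mem_Ioo]; omega
    have h0ni : (0:ℕ) ∉ insert r (Finset.Ioo 0 r) := by
      simp only [Finset.mem_insert, Finset.mem_Ioo]; omega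
    have hrni : r ∉ Finset.Ioo 0 r := by simp
    rw [hsplit, Finset.sum_insert h0ni, Finset.sum_insert hrni]
    simp only [Nat.choose_zero_right, Nat.choose_self, Nat.sub_zero, Nat.zero_mul,
      Nat.sub_self, Nat.mul_zero, pow_zero, Nat.cast_one, mul_one, one_mul]
    have hT : ‖(1:ℝ) + (1 + ∑ k ∈ Finset.Ioo 0 r, (r.choose k : ℝ) * γ ^ (k * (r - k))) - 2‖
        = ‖∑ k ∈ Finset.Ioo 0 r, (r.choose k : ℝ) * γ ^ (k * (r - k))‖ := by
      congr 1; ring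
    rw [hT]
    -- bound each term by x
    have hterm : ∀ k ∈ Finset.Ioo 0 r,
        ‖(r.choose k : ℝ) * γ ^ (k * (r - k))‖ ≤ x := by
      intro k hk
      simp only [Finset.mem_Ioo] at hk
      obtain ⟨hk0, hkr⟩ := hk
      set m : ℕ := min k (r - k) with hmdef
      have hm1 : 1 ≤ m := by omega
      have hm2 : 2 * m ≤ r := by omega
      have hprod : k * (r - k) = m * (r - m) := by
        rcases le_total k (r - k) with h | h
        · rw [hmdef, min_eq_left h]
        · rw [hmdef, min_eq_right h]
          have h1 : r - (r - k) = k := by omega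
          rw [h1, Nat.mul_comm]
      have hchoose : r.choose k = r.choose m := by
        rcases le_total k (r - k) with h | h
        · rw [hmdef, min_eq_left h]
        · rw [hmdef, min_eq_right h, Nat.choose_symm hkr.le]
      have hcabs : ‖(r.choose k : ℝ) * γ ^ (k * (r - k))‖
          = (r.choose k : ℝ) * c ^ (k * (r - k)) := by
        rw [norm_mul, norm_pow]
        simp [hcdef, Real.norm_eq_abs, Nat.abs_cast]
      rw [hcabs]
      have h1 : (r.choose k : ℝ) ≤ (r:ℝ) ^ m := by
        rw [hchoose]
        exact_mod_cast Nat.choose_le_pow r m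
      have hexp : (r - 1) * m ≤ 2 * (k * (r - k)) := by
        rw [hprod]
        have h2 : r ≤ 2 * (r - m) := by omega
        calc (r - 1) * m ≤ r * m := Nat.mul_le_mul_right m (by omega)
          _ ≤ (2 * (r - m)) * m := Nat.mul_le_mul_right m h2
          _ = 2 * (m * (r - m)) := by ring
      have h2 : c ^ (k * (r - k)) ≤ s ^ ((r - 1) * m) := by
        rw [hcs, ← pow_mul]
        apply pow_le_pow_of_le_one hs0.le hs1.le
        exact le_of_le_of_eq hexp (by ring)
      have h3 : (r.choose k : ℝ) * c ^ (k * (r - k)) ≤ x ^ m := by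
        have : x ^ m = (r:ℝ) ^ m * s ^ ((r - 1) * m) := by
          rw [hxdef, mul_pow, ← pow_mul]
        rw [this]
        exact mul_le_mul h1 h2 (by positivity) (by positivity)
      calc (r.choose k : ℝ) * c ^ (k * (r - k)) ≤ x ^ m := h3
        _ ≤ x := pow_le_of_le_one hx0 hx1 (by omega)
    calc ‖∑ k ∈ Finset.Ioo 0 r, (r.choose k : ℝ) * γ ^ (k * (r - k))‖
        ≤ ∑ k ∈ Finset.Ioo 0 r, ‖(r.choose k : ℝ) * γ ^ (k * (r - k))‖ :=
          norm_sum_le _ _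
      _ ≤ ∑ _k ∈ Finset.Ioo 0 r, x := Finset.sum_le_sum hterm
      _ = ((r - 1 : ℕ) : ℝ) * x := by
          rw [Finset.sum_const, Nat.card_Ioo, nsmul_eq_mul]; norm_num
      _ ≤ (r:ℝ) * x := by
          apply mul_le_mul_of_nonneg_right _ hx0
          exact_mod_cast Nat.sub_le r 1
      _ = (1/s) * ((r:ℝ)^2 * s^r) := by
          rw [hxdef, hsr]; field_simp
  have := key.add_const 2
  simp only [sub_add_cancel, zero_add] at this
  exact this
end
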